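/- Let G be a finite-index subgroup of a group Γ. Then G has the property of special symbol if and only if Γ has the property of special symbol. -/
import Mathlib


/-- A subshift of finite type over a group `G`: the intersection of all `G`-translates
of a cylinder given by a finite window `F ⊆ G` and a set `M` of allowed patterns
on `F` (the shift action being `(γ·σ)(g) = σ(γ⁻¹g)`). -/
def IsSFT {G : Type*} [Group G] {A : Type*} (Φ : Set (G → A)) : Prop :=
  ∃ (F : Finset G) (M : Set (F → A)),
    Φ = {σ : G → A | ∀ γ : G, (fun f : F => σ (γ * f)) ∈ M}

/-- The left translation action of `γ ∈ G` on the one-point compactification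
`G ∪ {∞}`, fixing `∞`. -/
def ptTranslate {G : Type*} [Group G] (γ : G) (x : OnePoint G) : OnePoint G :=
  (Option.map (fun g => γ * g) x : Option G)

/-- A (discrete) group `G` has the property of special symbol if its action on its
Alexandrov compactification `G ∪ {∞}` (on `G` itself when `G` is finite) is finitely
presented with a special symbol: there are a finite alphabet `A` with a symbol `$`,
a subshift of finite type `Φ ⊆ A^G`, and a continuous surjective `G`-equivariant
map `π : Φ → G ∪ {∞}` such that `π σ = g ∈ G` iff `σ g = $`. -/
def HasSpecialSymbol (G : Type*) [Group G] : Prop :=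
  ∃ (A : Type) (_ : Fintype A) (dollar : A) (Φ : Set (G → A))
    (π : (G → A) → OnePoint G),
    IsSFT Φ ∧
    (letI : TopologicalSpace G := ⊥; letI : TopologicalSpace A := ⊥;
      Continuous (fun σ : Φ => π σ.1)) ∧
    (∀ g : G, ∃ σ ∈ Φ, π σ = (g : OnePoint G)) ∧
    (Infinite G → ∃ σ ∈ Φ, π σ = OnePoint.infty) ∧
    (Finite G → ∀ σ ∈ Φ, π σ ≠ OnePoint.infty) ∧
    (∀ σ ∈ Φ, ∀ γ : G, π (fun g => σ (γ⁻¹ * g)) = ptTranslate γ (π σ)) ∧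
    (∀ σ ∈ Φ, ∀ g : G, π σ = (g : OnePoint G) ↔ σ g = dollar)

namespace SS18

variable {G : Type*} [Group G] {A B C : Type*}

lemma _root_.IsSFT.shift_mem {Φ : Set (G → A)} (h : IsSFT Φ) {σ : G → A} (hσ : σ ∈ Φ) (δ : G) :
    (fun g => σ (δ⁻¹ * g)) ∈ Φ := by
  obtain ⟨F, M, rfl⟩ := h
  intro γ
  simpa [mul_assoc] using hσ (δ⁻¹ * γ)

lemma _root_.IsSFT.inter {Φ₁ Φ₂ : Set (G → A)} (h₁ : IsSFT Φ₁) (h₂ : IsSFT Φ₂) :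
    IsSFT (Φ₁ ∩ Φ₂) := by
  classical
  obtain ⟨F₁, M₁, rfl⟩ := h₁
  obtain ⟨F₂, M₂, rfl⟩ := h₂
  refine ⟨F₁ ∪ F₂,
    {q | (fun f : F₁ => q ⟨↑f, Finset.mem_union_left _ f.2⟩) ∈ M₁ ∧
         (fun f : F₂ => q ⟨↑f, Finset.mem_union_right _ f.2⟩) ∈ M₂}, ?_⟩
  ext σ
  exact ⟨fun h γ => ⟨h.1 γ, h.2 γ⟩, fun h => ⟨fun γ => (h γ).1, fun γ => (h γ).2⟩⟩

/-- a sliding block code -/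
def applyBlock (W : Finset G) (r : (W → A) → B) (σ : G → A) : G → B :=
  fun γ => r fun w => σ (γ * w)

lemma isSFT_applyBlock_preimage {W : Finset G} {r : (W → A) → B} {Φ : Set (G → B)}
    (hΦ : IsSFT Φ) : IsSFT {σ : G → A | applyBlock W r σ ∈ Φ} := by
  classical
  obtain ⟨F, M, rfl⟩ := hΦ
  refine ⟨Finset.image (fun p : G × G => p.1 * p.2) (F ×ˢ W),
    {q | (fun f : F => r (fun w : W => q ⟨↑f * ↑w,
        Finset.mem_image.mpr ⟨(↑f, ↑w), Finset.mem_product.mpr ⟨f.2, w.2⟩, rfl⟩⟩)) ∈ M}, ?_⟩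
  have key : ∀ (σ : G → A) (γ : G),
      (fun f : F => r fun w : W => σ (γ * (↑f * ↑w)))
        = fun f : F => applyBlock W r σ (γ * ↑f) := by
    intro σ γ
    funext f
    simp only [applyBlock, mul_assoc]
  ext σ
  constructor
  · intro h γ
    have this1 : (fun f : F => applyBlock W r σ (γ * ↑f)) ∈ M := h γ
    show (fun f : F => r fun w : W => σ (γ * (↑f * ↑w))) ∈ M
    rw [key σ γ]
    exact this1
  · intro h γ
    have this1 : (fun f : F => r fun w : W => σ (γ * (↑f * ↑w))) ∈ M := h γ
    rw [key σ γ] at this1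
    exact this1

lemma isSFT_applyBlock_fix {W : Finset G} (r : (W → A) → A) :
    IsSFT {σ : G → A | applyBlock W r σ = σ} := by
  classical
  refine ⟨insert 1 W,
    {q | r (fun w : W => q ⟨↑w, Finset.mem_insert_of_mem w.2⟩)
        = q ⟨1, Finset.mem_insert_self _ _⟩}, ?_⟩
  ext σ
  constructor
  · intro h γ
    show r (fun w : W => σ (γ * ↑w)) = σ (γ * 1)
    rw [mul_one]
    exact congrFun h γ
  · intro h
    funext γ
    have this1 : (r fun w : W => σ (γ * ↑w)) = σ (γ * 1) := h γ
    show r (fun w : W => σ (γ * ↑w)) = σ γ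
    exact this1.trans (by rw [mul_one])

lemma applyBlock_comp (Wb : Finset G) (rb : (Wb → B) → C) (Wd : Finset G) (rd : (Wd → A) → B) :
    ∃ (Wc : Finset G) (rc : (Wc → A) → C),
      ∀ σ, applyBlock Wb rb (applyBlock Wd rd σ) = applyBlock Wc rc σ := by
  classical
  refine ⟨Finset.image (fun p : G × G => p.1 * p.2) (Wb ×ˢ Wd),
    fun q => rb (fun wb => rd (fun wd => q ⟨↑wb * ↑wd,
      Finset.mem_image.mpr ⟨(↑wb, ↑wd), Finset.mem_product.mpr ⟨wb.2, wd.2⟩, rfl⟩⟩)), ?_⟩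
  intro σ
  funext γ
  show rb _ = rb _
  congr 1
  funext wb
  show rd (fun wd => σ (γ * ↑wb * ↑wd)) = rd (fun wd => σ (γ * (↑wb * ↑wd)))
  congr 1
  funext wd
  rw [mul_assoc]

lemma isSFT_blockImage {Wb : Finset G} {rb : (Wb → A) → B} {Wd : Finset G} {rd : (Wd → B) → A}
    {Φ : Set (G → A)} (hΦ : IsSFT Φ)
    (hinv : ∀ σ : G → A, applyBlock Wd rd (applyBlock Wb rb σ) = σ) :
    IsSFT (applyBlock Wb rb '' Φ) := by
  have hchar : applyBlock Wb rb '' Φ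
      = {ξ | applyBlock Wd rd ξ ∈ Φ} ∩ {ξ | applyBlock Wb rb (applyBlock Wd rd ξ) = ξ} := by
    ext ξ
    constructor
    · rintro ⟨σ, hσ, rfl⟩
      refine ⟨?_, ?_⟩
      · show applyBlock Wd rd (applyBlock Wb rb σ) ∈ Φ
        rw [hinv σ]; exact hσ
      · show applyBlock Wb rb (applyBlock Wd rd (applyBlock Wb rb σ)) = applyBlock Wb rb σ
        rw [hinv σ]
    · rintro ⟨h1, h2⟩
      exact ⟨applyBlock Wd rd ξ, h1, h2⟩
  rw [hchar]
  refine (isSFT_applyBlock_preimage hΦ).inter ?_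
  obtain ⟨Wc, rc, hc⟩ := applyBlock_comp Wb rb Wd rd
  have : {ξ : G → B | applyBlock Wb rb (applyBlock Wd rd ξ) = ξ}
      = {ξ | applyBlock Wc rc ξ = ξ} := by
    ext ξ; rw [Set.mem_setOf_eq, Set.mem_setOf_eq, hc]
  rw [this]
  exact isSFT_applyBlock_fix rc

open scoped Classical



variable {G : Type*} [Group G] {A : Type*}

/-- position of the unique dollar, or `∞`. -/
noncomputable def dollarPos (d : A) (σ : G → A) : OnePoint G :=
  if h : ∃! g : G, σ g = d then ((h.choose : G) : OnePoint G) else OnePoint.infty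

lemma dollarPos_eq_coe {d : A} {σ : G → A} {g : G} (hg : σ g = d)
    (huniq : ∀ g₁ g₂ : G, σ g₁ = d → σ g₂ = d → g₁ = g₂) :
    dollarPos d σ = (g : OnePoint G) := by
  have hex : ∃! g' : G, σ g' = d := ⟨g, hg, fun y hy => huniq y g hy hg⟩
  rw [dollarPos, dif_pos hex]
  have : hex.choose = g := (huniq _ _ hex.choose_spec.1 hg)
  rw [this]

lemma dollarPos_eq_infty {d : A} {σ : G → A} (h : ∀ g : G, σ g ≠ d) :
    dollarPos d σ = OnePoint.infty := by
  rw [dollarPos, dif_neg]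
  rintro ⟨g, hg, -⟩
  exact h g hg

lemma dollarPos_spec {d : A} {σ : G → A} {g : G} (h : dollarPos d σ = (g : OnePoint G)) :
    σ g = d := by
  by_cases hex : ∃! g' : G, σ g' = d
  · rw [dollarPos, dif_pos hex] at h
    have : hex.choose = g := OnePoint.coe_eq_coe.mp h
    rw [← this]
    exact hex.choose_spec.1
  · rw [dollarPos, dif_neg hex] at h
    exact absurd h (OnePoint.infty_ne_coe g)

lemma onePoint_cases (x : OnePoint G) : x = OnePoint.infty ∨ ∃ g : G, x = (g : OnePoint G) :=
  Option.casesOn x (Or.inl rfl) fun g => Or.inr ⟨g, rfl⟩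

lemma ptTranslate_coe (γ g : G) : ptTranslate γ (g : OnePoint G) = ((γ * g : G) : OnePoint G) :=
  rfl

lemma ptTranslate_infty (γ : G) : ptTranslate γ (OnePoint.infty : OnePoint G) = OnePoint.infty :=
  rfl

/-- Assemble a special-symbol presentation from purely combinatorial data. -/
lemma mk_hasSpecialSymbol {A : Type} [Fintype A] (d : A) (Φ : Set (G → A))
    (hΦ : IsSFT Φ)
    (huniq : ∀ σ ∈ Φ, ∀ g₁ g₂ : G, σ g₁ = d → σ g₂ = d → g₁ = g₂)
    (hsurj : ∀ g : G, ∃ σ ∈ Φ, σ g = d)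
    (hinf : Infinite G → ∃ σ ∈ Φ, ∀ g : G, σ g ≠ d)
    (hfin : Finite G → ∀ σ ∈ Φ, ∃ g : G, σ g = d) :
    HasSpecialSymbol G := by
  classical
  refine ⟨A, inferInstance, d, Φ, dollarPos d, hΦ, ?_, ?_, ?_, ?_, ?_, ?_⟩
  · -- continuity
    letI : TopologicalSpace G := ⊥
    letI : TopologicalSpace A := ⊥
    haveI : DiscreteTopology G := ⟨rfl⟩
    haveI : DiscreteTopology A := ⟨rfl⟩
    rw [continuous_iff_continuousAt]
    intro σ₀
    by_cases h : ∃ g : G, σ₀.1 g = d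
    · obtain ⟨g₀, hg₀⟩ := h
      have hev : ∀ᶠ σ : Φ in nhds σ₀, dollarPos d σ.1 = dollarPos d σ₀.1 := by
        have hcont : Continuous fun σ : Φ => σ.1 g₀ :=
          (continuous_apply g₀).comp continuous_subtype_val
        have hopen : IsOpen {σ : Φ | σ.1 g₀ = d} := by
          have : {σ : Φ | σ.1 g₀ = d} = (fun σ : Φ => σ.1 g₀) ⁻¹' {d} := rfl
          rw [this]
          exact (isOpen_discrete _).preimage hcont
        filter_upwards [hopen.mem_nhds hg₀] with σ hσ
        rw [dollarPos_eq_coe hσ (huniq σ.1 σ.2), dollarPos_eq_coe hg₀ (huniq σ₀.1 σ₀.2)]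
      exact Filter.EventuallyEq.continuousAt hev
    · push_neg at h
      have hval : dollarPos d σ₀.1 = OnePoint.infty := dollarPos_eq_infty h
      rw [ContinuousAt, hval]
      rw [OnePoint.hasBasis_nhds_infty.tendsto_right_iff]
      rintro K ⟨-, hKc⟩
      have hKfin : K.Finite := hKc.finite_of_discrete
      have hopen : IsOpen {σ : Φ | ∀ g ∈ K, σ.1 g = σ₀.1 g} := by
        have heq : {σ : Φ | ∀ g ∈ K, σ.1 g = σ₀.1 g}
            = ⋂ g ∈ K, {σ : Φ | σ.1 g = σ₀.1 g} := by
          ext σ; simp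
        rw [heq]
        refine hKfin.isOpen_biInter fun g _ => ?_
        have hcont : Continuous fun σ : Φ => σ.1 g :=
          (continuous_apply g).comp continuous_subtype_val
        have : {σ : Φ | σ.1 g = σ₀.1 g} = (fun σ : Φ => σ.1 g) ⁻¹' {σ₀.1 g} := rfl
        rw [this]
        exact (isOpen_discrete _).preimage hcont
      filter_upwards [hopen.mem_nhds (fun g _ => rfl)] with σ hσ
      rcases onePoint_cases (dollarPos d σ.1) with hx | ⟨g, hx⟩
      · rw [hx]; exact Or.inr rfl
      · rw [hx]
        refine Or.inl ⟨g, ?_, rfl⟩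
        intro hgK
        have hgd : σ.1 g = d := dollarPos_spec hx
        exact h g ((hσ g hgK) ▸ hgd)
  · -- surjectivity onto G
    intro g
    obtain ⟨σ, hσ, hg⟩ := hsurj g
    exact ⟨σ, hσ, dollarPos_eq_coe hg (huniq σ hσ)⟩
  · -- infinity reached
    intro hinfG
    obtain ⟨σ, hσ, hnd⟩ := hinf hinfG
    exact ⟨σ, hσ, dollarPos_eq_infty hnd⟩
  · -- finite: infinity not reached
    intro hfinG σ hσ
    obtain ⟨g, hg⟩ := hfin hfinG σ hσ
    rw [dollarPos_eq_coe hg (huniq σ hσ)]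
    exact OnePoint.coe_ne_infty g
  · -- equivariance
    intro σ hσ γ
    by_cases h : ∃ g : G, σ g = d
    · obtain ⟨g, hg⟩ := h
      have h1 : dollarPos d σ = (g : OnePoint G) := dollarPos_eq_coe hg (huniq σ hσ)
      have hσ' : (fun g => σ (γ⁻¹ * g)) ∈ Φ := hΦ.shift_mem hσ γ
      have h2 : dollarPos d (fun g => σ (γ⁻¹ * g)) = ((γ * g : G) : OnePoint G) := by
        refine dollarPos_eq_coe ?_ (huniq _ hσ')
        show σ (γ⁻¹ * (γ * g)) = d
        rw [inv_mul_cancel_left]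
        exact hg
      rw [h1, h2, ptTranslate_coe]
    · push_neg at h
      rw [dollarPos_eq_infty h, dollarPos_eq_infty (fun g' => h (γ⁻¹ * g')), ptTranslate_infty]
  · -- dollar iff
    intro σ hσ g
    exact ⟨dollarPos_spec, fun hg => dollarPos_eq_coe hg (huniq σ hσ)⟩

lemma unpack (h : HasSpecialSymbol G) :
    ∃ (A : Type) (_ : Fintype A) (d : A) (Φ : Set (G → A)),
      IsSFT Φ ∧
      (∀ σ ∈ Φ, ∀ g₁ g₂ : G, σ g₁ = d → σ g₂ = d → g₁ = g₂) ∧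
      (∀ g : G, ∃ σ ∈ Φ, σ g = d) ∧
      (Infinite G → ∃ σ ∈ Φ, ∀ g : G, σ g ≠ d) ∧
      (Finite G → ∀ σ ∈ Φ, ∃ g : G, σ g = d) := by
  obtain ⟨A, fA, d, Φ, π, hΦ, -, hsurj, hinf, hfin, -, hiff⟩ := h
  refine ⟨A, fA, d, Φ, hΦ, ?_, ?_, ?_, ?_⟩
  · intro σ hσ g₁ g₂ h₁ h₂
    have e₁ : π σ = (g₁ : OnePoint G) := (hiff σ hσ g₁).mpr h₁
    have e₂ : π σ = (g₂ : OnePoint G) := (hiff σ hσ g₂).mpr h₂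
    exact OnePoint.coe_eq_coe.mp (e₁.symm.trans e₂)
  · intro g
    obtain ⟨σ, hσ, hg⟩ := hsurj g
    exact ⟨σ, hσ, (hiff σ hσ g).mp hg⟩
  · intro hinfG
    obtain ⟨σ, hσ, hinfy⟩ := hinf hinfG
    refine ⟨σ, hσ, fun g hg => ?_⟩
    have := (hiff σ hσ g).mpr hg
    rw [hinfy] at this
    exact (OnePoint.coe_ne_infty g) this.symm
  · intro hfinG σ hσ
    rcases onePoint_cases (π σ) with hx | ⟨g, hx⟩
    · exact absurd hx (hfin hfinG σ hσ)
    · exact ⟨g, (hiff σ hσ g).mp hx⟩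



/-- data of a right transversal for a finite-index subgroup, with `1` as the
representative of the coset of `1`. -/
structure TransData {K : Type*} [Group K] (H : Subgroup K) where
  n : ℕ
  cos : K → Fin n
  reps : Fin n → K
  mem_nu : ∀ k : K, k * (reps (cos k))⁻¹ ∈ H
  cos_mul : ∀ h k : K, h ∈ H → cos (h * k) = cos k
  cos_reps : ∀ i, cos (reps i) = i
  reps_cos_one : reps (cos 1) = 1

variable {K : Type*} [Group K] {H : Subgroup K}

lemma finite_quotient_of_finiteIndex (hfi : H.FiniteIndex) : Finite (K ⧸ H) := by
  have h : Nat.card (K ⧸ H) ≠ 0 := by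
    rw [← Subgroup.index_eq_card]
    exact hfi.index_ne_zero
  exact (Nat.card_ne_zero.mp h).2

lemma infinite_subgroup_of_finiteIndex (hfi : H.FiniteIndex) [hK : Infinite K] :
    Infinite H := by
  by_contra h
  rw [not_infinite_iff_finite] at h
  haveI := h
  haveI := finite_quotient_of_finiteIndex hfi
  haveI : Finite K := Finite.of_equiv ((K ⧸ H) × H) Subgroup.groupEquivQuotientProdSubgroup.symm
  exact not_finite K

lemma infinite_of_subgroup (h : Infinite H) : Infinite K :=
  Infinite.of_injective (fun m : H => (m : K)) Subtype.coe_injective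

noncomputable def transData (hfi : H.FiniteIndex) : TransData H := by
  haveI : Finite (K ⧸ H) := finite_quotient_of_finiteIndex hfi
  haveI : Finite (Quotient (QuotientGroup.rightRel H)) :=
    Finite.of_equiv _ (QuotientGroup.quotientRightRelEquivQuotientLeftRel H).symm
  haveI : Fintype (Quotient (QuotientGroup.rightRel H)) := Fintype.ofFinite _
  let e := Fintype.equivFin (Quotient (QuotientGroup.rightRel H))
  let cos0 : K → Fin (Fintype.card (Quotient (QuotientGroup.rightRel H))) :=
    fun k => e (Quotient.mk (QuotientGroup.rightRel H) k)
  let reps0 : Fin (Fintype.card (Quotient (QuotientGroup.rightRel H))) → K :=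
    fun i => (e.symm i).out
  have key0 : ∀ k, Quotient.mk (QuotientGroup.rightRel H) (reps0 (cos0 k))
      = Quotient.mk (QuotientGroup.rightRel H) k := by
    intro k
    show Quotient.mk _ (e.symm (e (Quotient.mk _ k))).out = _
    rw [Equiv.symm_apply_apply]
    exact Quotient.out_eq _
  have hrel : ∀ a b : K, Quotient.mk (QuotientGroup.rightRel H) a
      = Quotient.mk (QuotientGroup.rightRel H) b → b * a⁻¹ ∈ H := by
    intro a b hab
    have := Quotient.exact hab
    exact (QuotientGroup.rightRel_apply).mp this
  have hrel' : ∀ a b : K, b * a⁻¹ ∈ H → Quotient.mk (QuotientGroup.rightRel H) a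
      = Quotient.mk (QuotientGroup.rightRel H) b := by
    intro a b hab
    exact Quotient.sound ((QuotientGroup.rightRel_apply).mpr hab)
  refine ⟨Fintype.card (Quotient (QuotientGroup.rightRel H)), cos0,
    fun i => if i = cos0 1 then 1 else reps0 i, ?_, ?_, ?_, ?_⟩
  · intro k
    by_cases hk : cos0 k = cos0 1
    · simp only [hk, if_pos, inv_one, mul_one]
      have h1 : Quotient.mk (QuotientGroup.rightRel H) k
          = Quotient.mk (QuotientGroup.rightRel H) 1 := by
        have := congrArg e.symm hk
        simpa [cos0] using this
      have := hrel _ _ h1.symm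
      simpa using H.inv_mem_iff.mp (by simpa using this)
    · simp only [if_neg hk]
      exact hrel _ _ (key0 k)
  · intro h k hh
    show e _ = e _
    congr 1
    exact hrel' _ _ (by simpa using H.inv_mem hh)
  · intro i
    by_cases hi : i = cos0 1
    · simp only [hi, if_pos]
    · simp only [if_neg hi]
      show e (Quotient.mk _ (e.symm i).out) = i
      rw [Quotient.out_eq]
      exact e.apply_symm_apply i
  · simp only [if_pos]

namespace TransData

variable (td : TransData H)

def nu (k : K) : H := ⟨k * (td.reps (td.cos k))⁻¹, td.mem_nu k⟩

lemma nu_mul_reps (k : K) : (td.nu k : K) * td.reps (td.cos k) = k := by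
  simp [nu, inv_mul_cancel_right]

lemma cos_coe_mul (m : H) (k : K) : td.cos (↑m * k) = td.cos k := td.cos_mul ↑m k m.2

lemma nu_coe_mul (m : H) (k : K) : td.nu (↑m * k) = m * td.nu k := by
  apply Subtype.ext
  show (↑m * k) * (td.reps (td.cos (↑m * k)))⁻¹ = ↑m * (k * (td.reps (td.cos k))⁻¹)
  rw [td.cos_coe_mul m k, mul_assoc]

lemma nu_reps (i : Fin td.n) : td.nu (td.reps i) = 1 := by
  apply Subtype.ext
  show td.reps i * (td.reps (td.cos (td.reps i)))⁻¹ = 1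
  rw [td.cos_reps i, mul_inv_cancel]

lemma exists_rep (a b : K) : ∃ (i : Fin td.n) (m : H), a * (td.reps i)⁻¹ = b * ↑m := by
  refine ⟨td.cos (b⁻¹ * a), td.nu (b⁻¹ * a), ?_⟩
  show a * (td.reps (td.cos (b⁻¹ * a)))⁻¹ = b * ((b⁻¹ * a) * (td.reps (td.cos (b⁻¹ * a)))⁻¹)
  group

lemma rep_inj {a b : K} {i j : Fin td.n} {m₁ m₂ : H}
    (h₁ : a * (td.reps i)⁻¹ = b * ↑m₁) (h₂ : a * (td.reps j)⁻¹ = b * ↑m₂) : i = j := by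
  have e₁ : td.reps i = (↑m₁ : K)⁻¹ * (b⁻¹ * a) := by
    have : (b * ↑m₁)⁻¹ * a = td.reps i := by rw [← h₁]; group
    rw [← this]; group
  have e₂ : td.reps j = (↑m₂ : K)⁻¹ * (b⁻¹ * a) := by
    have : (b * ↑m₂)⁻¹ * a = td.reps j := by rw [← h₂]; group
    rw [← this]; group
  have e₃ : td.reps i = ↑(m₁⁻¹ * m₂) * td.reps j := by
    rw [e₁, e₂]
    push_cast
    group
  calc i = td.cos (td.reps i) := (td.cos_reps i).symm
    _ = td.cos (↑(m₁⁻¹ * m₂) * td.reps j) := by rw [e₃]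
    _ = td.cos (td.reps j) := td.cos_coe_mul _ _
    _ = j := td.cos_reps j

end TransData


namespace TransData
variable {K : Type*} [Group K] {H : Subgroup K} (td : TransData H) {A : Type*}
/-- unfold a configuration on `K` into a configuration on `H` with stacked alphabet. -/
def unfold (σ : K → A) : H → (Fin td.n → A) := fun m i => σ (↑m * td.reps i)

def refold (ξ : H → Fin td.n → A) : K → A := fun k => ξ (td.nu k) (td.cos k)

lemma refold_unfold (σ : K → A) : td.refold (td.unfold σ) = σ := by
  funext k
  show σ (↑(td.nu k) * td.reps (td.cos k)) = σ k
  rw [td.nu_mul_reps]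

lemma unfold_refold (ξ : H → Fin td.n → A) : td.unfold (td.refold ξ) = ξ := by
  funext m i
  show ξ (td.nu (↑m * td.reps i)) (td.cos (↑m * td.reps i)) = ξ m i
  rw [td.cos_coe_mul m (td.reps i), td.cos_reps i, td.nu_coe_mul m (td.reps i), td.nu_reps i,
    mul_one]

lemma isSFT_unfold {Φ : Set (K → A)} (hΦ : IsSFT Φ) : IsSFT (td.unfold '' Φ) := by
  obtain ⟨F, M, rfl⟩ := hΦ
  set w : Fin td.n → F → H := fun i f => td.nu (td.reps i * ↑f) with hw
  set κ : Fin td.n → F → Fin td.n := fun i f => td.cos (td.reps i * ↑f) with hκ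
  have hkey : ∀ (i : Fin td.n) (f : F), (↑(w i f) : K) * td.reps (κ i f) = td.reps i * ↑f :=
    fun i f => td.nu_mul_reps _
  refine ⟨Finset.image (fun p : Fin td.n × F => w p.1 p.2) (Finset.univ ×ˢ F.attach),
    {q | ∀ i : Fin td.n, (fun f : F => q ⟨w i f,
      Finset.mem_image.mpr ⟨(i, ⟨↑f, f.2⟩), Finset.mem_product.mpr
        ⟨Finset.mem_univ _, F.mem_attach _⟩, rfl⟩⟩ (κ i f)) ∈ M}, ?_⟩
  ext ξ
  constructor
  · rintro ⟨σ, hσ, rfl⟩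
    intro m i
    have h1 : (fun f : F => td.unfold σ (m * w i f) (κ i f))
        = fun f : F => σ ((↑m * td.reps i) * ↑f) := by
      funext f
      show σ (↑(m * w i f) * td.reps (κ i f)) = σ ((↑m * td.reps i) * ↑f)
      have : (↑(m * w i f) : K) = ↑m * ↑(w i f) := rfl
      rw [this, mul_assoc, hkey i f, ← mul_assoc]
    show (fun f : F => td.unfold σ (m * w i f) (κ i f)) ∈ M
    rw [h1]
    exact hσ (↑m * td.reps i)
  · intro hξ
    refine ⟨td.refold ξ, ?_, (td.unfold_refold ξ).symm ▸ rfl⟩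
    intro γ
    have hγ : γ = ↑(td.nu γ) * td.reps (td.cos γ) := (td.nu_mul_reps γ).symm
    have h1 : (fun f : F => td.refold ξ (γ * ↑f))
        = fun f : F => ξ (td.nu γ * w (td.cos γ) f) (κ (td.cos γ) f) := by
      funext f
      show ξ (td.nu (γ * ↑f)) (td.cos (γ * ↑f)) = _
      have h2 : γ * ↑f = ↑(td.nu γ) * (td.reps (td.cos γ) * ↑f) := by
        rw [← mul_assoc, td.nu_mul_reps]
      rw [h2, td.cos_coe_mul, td.nu_coe_mul]
    rw [h1]
    exact hξ (td.nu γ) (td.cos γ)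
end TransData

/-- every finite group has the special symbol property : obligations form -/
lemma finite_obligations (G : Type*) [Group G] [Finite G] :
    ∃ Φ : Set (G → Bool), IsSFT Φ ∧
      (∀ σ ∈ Φ, ∀ g₁ g₂ : G, σ g₁ = true → σ g₂ = true → g₁ = g₂) ∧
      (∀ g : G, ∃ σ ∈ Φ, σ g = true) ∧
      (Finite G → ∀ σ ∈ Φ, ∃ g : G, σ g = true) ∧
      ∀ σ ∈ Φ, ∃! g : G, σ g = true := by
  classical
  haveI : Fintype G := Fintype.ofFinite G
  have key : ∀ (σ : G → Bool) (γ : G),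
      (∃! f : (Finset.univ : Finset G), σ (γ * ↑f) = true) ↔ (∃! g : G, σ g = true) := by
    intro σ γ
    constructor
    · rintro ⟨f, hf, hu⟩
      refine ⟨γ * ↑f, hf, ?_⟩
      intro y hy
      have h1 : σ (γ * ↑(⟨γ⁻¹ * y, Finset.mem_univ _⟩ : (Finset.univ : Finset G))) = true := by
        simpa [mul_inv_cancel_left] using hy
      have := hu _ h1
      have h2 : γ⁻¹ * y = ↑f := congrArg Subtype.val this
      rw [← h2, mul_inv_cancel_left]
    · rintro ⟨g, hg, hu⟩
      refine ⟨⟨γ⁻¹ * g, Finset.mem_univ _⟩, by simpa [mul_inv_cancel_left] using hg, ?_⟩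
      rintro ⟨y, hymem⟩ hy2
      have := hu (γ * y) hy2
      apply Subtype.ext
      show y = γ⁻¹ * g
      rw [← this, inv_mul_cancel_left]
  refine ⟨{σ : G → Bool | ∃! g : G, σ g = true}, ?_, ?_, ?_, ?_, ?_⟩
  · refine ⟨Finset.univ, setOf (fun p : ↥(Finset.univ : Finset G) → Bool => ∃! f, p f = true), ?_⟩
    ext σ
    constructor
    · intro hσ γ
      exact (key σ γ).mpr hσ
    · intro hσ
      exact (key σ 1).mp (hσ 1)
  · rintro σ ⟨g, -, hu⟩ g₁ g₂ h₁ h₂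
    rw [hu g₁ h₁, hu g₂ h₂]
  · intro g
    refine ⟨fun g' => if g' = g then true else false, ⟨g, by simp, ?_⟩, by simp⟩
    intro y hy
    by_contra hne
    simp [hne] at hy
  · rintro - σ ⟨g, hg, -⟩
    exact ⟨g, hg⟩
  · exact fun σ hσ => hσ


section L1
variable {K : Type*} [Group K] {H : Subgroup K} {A : Type*}

/-- the alphabet for the restricted presentation -/
abbrev L1A (td : TransData H) (A : Type*) : Type _ :=
  ((Fin td.n → A) ⊕ Unit) × Option (Fin td.n → A)

variable (td : TransData H) (d : A) (z : H)

noncomputable def L1Wb : Finset H := {1, z⁻¹}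
noncomputable def L1Wd : Finset H := {1, z}

lemma mem_L1Wb_one : (1 : H) ∈ L1Wb z := by simp [L1Wb]
lemma mem_L1Wb_z : z⁻¹ ∈ L1Wb z := by simp [L1Wb]
lemma mem_L1Wd_one : (1 : H) ∈ L1Wd z := by simp [L1Wd]
lemma mem_L1Wd_z : z ∈ L1Wd z := by simp [L1Wd]

noncomputable def L1rb (q : L1Wb z → (Fin td.n → A)) : L1A td A :=
  (if q ⟨1, mem_L1Wb_one z⟩ (td.cos 1) = d then Sum.inr () else Sum.inl (q ⟨1, mem_L1Wb_one z⟩),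
   if q ⟨z⁻¹, mem_L1Wb_z z⟩ (td.cos 1) = d then some (q ⟨z⁻¹, mem_L1Wb_z z⟩) else none)

noncomputable def L1rd (q : L1Wd z → L1A td A) : Fin td.n → A :=
  (q ⟨1, mem_L1Wd_one z⟩).1.elim (fun a => a)
    (fun _ => (q ⟨z, mem_L1Wd_z z⟩).2.getD (fun _ => d))

lemma L1B_apply (ξ : H → Fin td.n → A) (m : H) :
    applyBlock (L1Wb z) (L1rb td d z) ξ m
      = (if ξ m (td.cos 1) = d then Sum.inr () else Sum.inl (ξ m),
         if ξ (m * z⁻¹) (td.cos 1) = d then some (ξ (m * z⁻¹)) else none) := by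
  show L1rb td d z (fun w => ξ (m * ↑w)) = _
  simp [L1rb, mul_one]

lemma L1_inv (ξ : H → Fin td.n → A) :
    applyBlock (L1Wd z) (L1rd td d z) (applyBlock (L1Wb z) (L1rb td d z) ξ) = ξ := by
  funext m
  have hA : applyBlock (L1Wb z) (L1rb td d z) ξ (m * 1)
      = (if ξ m (td.cos 1) = d then Sum.inr () else Sum.inl (ξ m),
         if ξ (m * z⁻¹) (td.cos 1) = d then some (ξ (m * z⁻¹)) else none) := by
    rw [mul_one, L1B_apply]
  have hZ : applyBlock (L1Wb z) (L1rb td d z) ξ (m * z)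
      = (if ξ (m * z) (td.cos 1) = d then Sum.inr () else Sum.inl (ξ (m * z)),
         if ξ m (td.cos 1) = d then some (ξ m) else none) := by
    rw [L1B_apply]
    simp [mul_inv_cancel_right]
  show (applyBlock (L1Wb z) (L1rb td d z) ξ (m * 1)).1.elim (fun a => a)
      (fun _ => (applyBlock (L1Wb z) (L1rb td d z) ξ (m * z)).2.getD (fun _ => d)) = ξ m
  rw [hA, hZ]
  by_cases hc : ξ m (td.cos 1) = d
  · simp [hc]
  · simp [hc]

lemma unfold_cos_one (σ : K → A) (m : H) : td.unfold σ m (td.cos 1) = σ ↑m := by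
  show σ (↑m * td.reps (td.cos 1)) = σ ↑m
  rw [td.reps_cos_one, mul_one]

end L1

/-- Restriction of the special symbol property to a finite-index subgroup. -/
lemma down {K : Type*} [Group K] (H : Subgroup K) (hfi : H.FiniteIndex)
    (hinfH : Infinite H) (h : HasSpecialSymbol K) : HasSpecialSymbol H := by
  classical
  obtain ⟨A, fA, d, Φ, hΦ, huniq, hsurj, hinf, hfin⟩ := unpack h
  haveI := fA
  haveI : Infinite K := infinite_of_subgroup hinfH
  haveI := hinfH
  haveI : Nontrivial H := inferInstance
  obtain ⟨z, hz⟩ := exists_ne (1 : H)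
  let td := transData hfi
  set ΦN : Set (H → L1A td A) :=
    applyBlock (L1Wb z) (L1rb td d z) '' (td.unfold '' Φ) with hΦN
  have hfirst : ∀ (ξ : H → Fin td.n → A) (m : H),
      applyBlock (L1Wb z) (L1rb td d z) ξ m = ((Sum.inr () : (Fin td.n → A) ⊕ Unit), none)
        → ξ m (td.cos 1) = d := by
    intro ξ m hEq
    rw [L1B_apply] at hEq
    have h1 := congrArg Prod.fst hEq
    by_cases hc : ξ m (td.cos 1) = d
    · exact hc
    · rw [if_neg hc] at h1
      exact absurd h1 (by simp)
  refine mk_hasSpecialSymbol ((Sum.inr () : (Fin td.n → A) ⊕ Unit), none) ΦN ?_ ?_ ?_ ?_ ?_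
  · exact isSFT_blockImage (td.isSFT_unfold hΦ) (L1_inv td d z)
  · rintro ξ' ⟨ξ, ⟨σ, hσ, rfl⟩, rfl⟩ m₁ m₂ h₁ h₂
    have e₁ : σ ↑m₁ = d := by
      have := hfirst (td.unfold σ) m₁ h₁
      rwa [unfold_cos_one] at this
    have e₂ : σ ↑m₂ = d := by
      have := hfirst (td.unfold σ) m₂ h₂
      rwa [unfold_cos_one] at this
    exact Subtype.coe_injective (huniq σ hσ _ _ e₁ e₂)
  · intro m
    obtain ⟨σ, hσ, hd⟩ := hsurj ↑m
    refine ⟨applyBlock (L1Wb z) (L1rb td d z) (td.unfold σ),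
      ⟨td.unfold σ, ⟨σ, hσ, rfl⟩, rfl⟩, ?_⟩
    rw [L1B_apply]
    have hpos : td.unfold σ m (td.cos 1) = d := by rw [unfold_cos_one]; exact hd
    have hneg : ¬ td.unfold σ (m * z⁻¹) (td.cos 1) = d := by
      rw [unfold_cos_one]
      intro hcon
      have := huniq σ hσ _ _ hcon hd
      have hz1 : m * z⁻¹ = m := Subtype.coe_injective this
      have hz2 : z⁻¹ = 1 := mul_left_cancel (hz1.trans (mul_one m).symm)
      exact hz (by rw [← inv_inv z, hz2, inv_one])
    rw [if_pos hpos, if_neg hneg]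
  · intro _
    obtain ⟨σ, hσ, hnd⟩ := hinf ‹Infinite K›
    refine ⟨applyBlock (L1Wb z) (L1rb td d z) (td.unfold σ),
      ⟨td.unfold σ, ⟨σ, hσ, rfl⟩, rfl⟩, ?_⟩
    intro m hcon
    have := hfirst (td.unfold σ) m hcon
    rw [unfold_cos_one] at this
    exact hnd ↑m this
  · intro hfinH
    exact absurd hfinH (by rw [← not_infinite_iff_finite, not_not]; exact hinfH)

/-- Extension of the special symbol property from a finite-index subgroup. -/
lemma up {K : Type*} [Group K] (H : Subgroup K) (hfi : H.FiniteIndex)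
    (hinfK : Infinite K) (h : HasSpecialSymbol H) : HasSpecialSymbol K := by
  classical
  obtain ⟨A, fA, d, X, hX, huniqX, hsurjX, hinfX, -⟩ := unpack h
  haveI := fA
  haveI := hinfK
  haveI : Infinite H := infinite_subgroup_of_finiteIndex hfi
  let td := transData hfi
  obtain ⟨F, M, hXeq⟩ := hX
  -- the two SFT conditions
  set C1 : Set (K → A × Fin td.n) :=
    {σ | ∀ γ : K, (fun f : F => (σ (γ * ((f : H) : K))).1) ∈ M} with hC1def
  set C2 : Set (K → A × Fin td.n) :=
    {σ | ∀ (γ : K) (j : Fin td.n), (σ γ).1 = d →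
      σ (γ * td.reps ((σ γ).2) * (td.reps j)⁻¹) = (d, j)} with hC2def
  have hC1 : IsSFT C1 := by
    refine ⟨F.image (fun m : H => (m : K)),
      {q | (fun f : F => (q ⟨((f : H) : K), Finset.mem_image_of_mem _ f.2⟩).1) ∈ M}, ?_⟩
    ext σ
    exact ⟨fun hσ γ => hσ γ, fun hσ γ => hσ γ⟩
  have h1W : (1 : K) ∈ insert (1 : K)
      (Finset.image (fun p : Fin td.n × Fin td.n => td.reps p.1 * (td.reps p.2)⁻¹)
        Finset.univ) := Finset.mem_insert_self _ _
  have hijW : ∀ i j : Fin td.n, td.reps i * (td.reps j)⁻¹ ∈ insert (1 : K)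
      (Finset.image (fun p : Fin td.n × Fin td.n => td.reps p.1 * (td.reps p.2)⁻¹)
        Finset.univ) := fun i j => Finset.mem_insert_of_mem
    (Finset.mem_image.mpr ⟨(i, j), Finset.mem_univ _, rfl⟩)
  have hC2 : IsSFT C2 := by
    refine ⟨insert (1 : K)
      (Finset.image (fun p : Fin td.n × Fin td.n => td.reps p.1 * (td.reps p.2)⁻¹)
        Finset.univ),
      {q | ∀ j : Fin td.n, (q ⟨1, h1W⟩).1 = d →
        q ⟨td.reps ((q ⟨1, h1W⟩).2) * (td.reps j)⁻¹, hijW _ _⟩ = (d, j)}, ?_⟩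
    ext σ
    constructor
    · intro hσ γ
      show ∀ j : Fin td.n, (σ (γ * 1)).1 = d →
        σ (γ * (td.reps ((σ (γ * 1)).2) * (td.reps j)⁻¹)) = (d, j)
      intro j
      rw [mul_one, ← mul_assoc]
      exact hσ γ j
    · intro hσ γ j
      have h2 : (σ (γ * 1)).1 = d →
          σ (γ * (td.reps ((σ (γ * 1)).2) * (td.reps j)⁻¹)) = (d, j) := hσ γ j
      rw [mul_one, ← mul_assoc] at h2
      exact h2
  -- column lemma
  have hcol : ∀ σ ∈ C1, ∀ γ : K, (fun m : H => (σ (γ * (m : K))).1) ∈ X := by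
    intro σ hσ γ
    rw [hXeq]
    intro m'
    have h2 := hσ (γ * (m' : K))
    have heq : (fun f : F => (σ (γ * ((((m' * (f : H)) : H)) : K))).1)
        = fun f : F => (σ ((γ * (m' : K)) * ((f : H) : K))).1 := by
      funext f
      push_cast
      rw [mul_assoc]
    show (fun f : F => (σ (γ * ((((m' * (f : H)) : H)) : K))).1) ∈ M
    rw [heq]
    exact h2
  -- decomposition of K via left cosets
  have hmem : ∀ γ : K, ((QuotientGroup.mk γ : K ⧸ H).out)⁻¹ * γ ∈ H := by
    intro γ
    rw [← QuotientGroup.eq]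
    exact QuotientGroup.out_eq' _
  set μ : K → H := fun γ => ⟨((QuotientGroup.mk γ : K ⧸ H).out)⁻¹ * γ, hmem γ⟩ with hμdef
  have f0 : ∀ γ : K, (QuotientGroup.mk γ : K ⧸ H).out * ↑(μ γ) = γ := by
    intro γ
    show _ * (_⁻¹ * γ) = γ
    rw [mul_inv_cancel_left]
  have f1 : ∀ (γ : K) (m : H), (QuotientGroup.mk (γ * (m : K)) : K ⧸ H)
      = QuotientGroup.mk γ := fun γ m => QuotientGroup.mk_mul_of_mem γ m.2
  have f2 : ∀ (γ : K) (m : H), μ (γ * (m : K)) = μ γ * m := by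
    intro γ m
    apply Subtype.ext
    show ((QuotientGroup.mk (γ * (m : K)) : K ⧸ H).out)⁻¹ * (γ * (m : K))
      = (((QuotientGroup.mk γ : K ⧸ H).out)⁻¹ * γ) * (m : K)
    rw [f1, mul_assoc]
  refine mk_hasSpecialSymbol (A := A × Fin td.n) (d, td.cos 1) (C1 ∩ C2)
    (hC1.inter hC2) ?_ ?_ ?_ ?_
  · -- uniqueness of the dollar
    rintro σ ⟨hσ1, hσ2⟩ p p' h₁ h₂
    have hd1 : (σ p).1 = d := by rw [h₁]
    have hl1 : (σ p).2 = td.cos 1 := by rw [h₁]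
    have hclu : ∀ j : Fin td.n, σ (p * (td.reps j)⁻¹) = (d, j) := by
      intro j
      have h3 := hσ2 p j hd1
      rw [hl1, td.reps_cos_one, mul_one] at h3
      exact h3
    obtain ⟨js, m₀, hjs⟩ := td.exists_rep p p'
    set x : H → A := fun m => (σ (p' * (m : K))).1 with hxdef
    have hx : x ∈ X := hcol σ hσ1 p'
    have hxm : x m₀ = d := by
      show (σ (p' * (m₀ : K))).1 = d
      rw [← hjs, hclu js]
    have hx1 : x 1 = d := by
      show (σ (p' * ((1 : H) : K))).1 = d
      rw [Subgroup.coe_one, mul_one, h₂]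
    have hm : m₀ = (1 : H) := huniqX x hx m₀ 1 hxm hx1
    rw [hm] at hjs
    have hp' : p * (td.reps js)⁻¹ = p' := by
      rw [hjs, Subgroup.coe_one, mul_one]
    have hσp' : σ p' = (d, js) := by rw [← hp']; exact hclu js
    have hjs1 : js = td.cos 1 := by
      have h4 := hσp'.symm.trans h₂
      exact (Prod.mk.injEq _ _ _ _).mp h4 |>.2
    rw [hjs1, td.reps_cos_one, inv_one, mul_one] at hp'
    exact hp'
  · -- surjectivity
    intro p
    have hrep : ∀ c : K ⧸ H, ∃ (i : Fin td.n) (m : H),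
        p * (td.reps i)⁻¹ = c.out * (m : K) := fun c => td.exists_rep p c.out
    choose iC mC hC using hrep
    have hxe : ∀ c : K ⧸ H, ∃ x ∈ X, x (mC c) = d := fun c => hsurjX (mC c)
    choose xC hxC hxCd using hxe
    set σ : K → A × Fin td.n :=
      fun γ => (xC (QuotientGroup.mk γ) (μ γ), iC (QuotientGroup.mk γ)) with hσdef
    have hds : ∀ γ : K, (σ γ).1 = d ↔ μ γ = mC (QuotientGroup.mk γ) := by
      intro γ
      constructor
      · intro hd
        exact huniqX _ (hxC (QuotientGroup.mk γ)) _ _ hd (hxCd (QuotientGroup.mk γ))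
      · intro hEq
        show xC (QuotientGroup.mk γ) (μ γ) = d
        rw [hEq]
        exact hxCd (QuotientGroup.mk γ)
    have hgen : ∀ (γ : K), γ = (QuotientGroup.mk γ : K ⧸ H).out * ↑(μ γ) := fun γ => (f0 γ).symm
    have hC1σ : σ ∈ C1 := by
      intro γ
      have hXc := hxC (QuotientGroup.mk γ)
      rw [hXeq] at hXc
      have h2 := hXc (μ γ)
      have heq : (fun f : F => (σ (γ * ((f : H) : K))).1)
          = fun f : F => xC (QuotientGroup.mk γ) (μ γ * (f : H)) := by
        funext f
        show (xC (QuotientGroup.mk (γ * ((f : H) : K))) (μ (γ * ((f : H) : K)))) = _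
        rw [f1 γ (f : H), f2 γ (f : H)]
      show (fun f : F => (σ (γ * ((f : H) : K))).1) ∈ M
      rw [heq]
      exact h2
    have hdpos : ∀ γ : K, (σ γ).1 = d → γ = p * (td.reps (iC (QuotientGroup.mk γ)))⁻¹ := by
      intro γ hd
      have hμ : μ γ = mC (QuotientGroup.mk γ) := (hds γ).mp hd
      have h6 : γ = Quotient.out (QuotientGroup.mk γ : K ⧸ H) * ↑(mC (QuotientGroup.mk γ)) := by
        rw [← hμ]
        exact hgen γ
      exact h6.trans (hC (QuotientGroup.mk γ)).symm
    have hC2σ : σ ∈ C2 := by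
      intro γ j hd
      have hγ : γ = p * (td.reps (iC (QuotientGroup.mk γ)))⁻¹ := hdpos γ hd
      have hlab : (σ γ).2 = iC (QuotientGroup.mk γ) := rfl
      have hpos : γ * td.reps ((σ γ).2) * (td.reps j)⁻¹ = p * (td.reps j)⁻¹ := by
        rw [hlab]
        nth_rewrite 1 [hγ]
        rw [inv_mul_cancel_right]
      rw [hpos]
      set γ' := p * (td.reps j)⁻¹ with hγ'def
      have hiC' : iC (QuotientGroup.mk γ') = j := by
        refine td.rep_inj (hC (QuotientGroup.mk γ')) (m₂ := μ γ') ?_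
        show p * (td.reps j)⁻¹ = Quotient.out (QuotientGroup.mk γ' : K ⧸ H) * ↑(μ γ')
        rw [← hγ'def]
        exact hgen γ'
      have hm' : μ γ' = mC (QuotientGroup.mk γ') := by
        have h5 : Quotient.out (QuotientGroup.mk γ' : K ⧸ H) * ↑(μ γ')
            = Quotient.out (QuotientGroup.mk γ' : K ⧸ H) * ↑(mC (QuotientGroup.mk γ')) := by
          rw [← hgen γ', ← hC (QuotientGroup.mk γ'), hiC', ← hγ'def]
        exact Subtype.coe_injective (mul_left_cancel h5)
      have hfst : (σ γ').1 = d := (hds γ').mpr hm'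
      exact Prod.ext hfst hiC'
    refine ⟨σ, ⟨hC1σ, hC2σ⟩, ?_⟩
    have hiC0 : iC (QuotientGroup.mk p) = td.cos 1 := by
      refine td.rep_inj (hC (QuotientGroup.mk p)) (m₂ := μ p) ?_
      show p * (td.reps (td.cos 1))⁻¹ = Quotient.out (QuotientGroup.mk p : K ⧸ H) * ↑(μ p)
      rw [td.reps_cos_one, inv_one, mul_one]
      exact hgen p
    have hm0 : μ p = mC (QuotientGroup.mk p) := by
      have h5 : Quotient.out (QuotientGroup.mk p : K ⧸ H) * ↑(μ p)
          = Quotient.out (QuotientGroup.mk p : K ⧸ H) * ↑(mC (QuotientGroup.mk p)) := by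
        rw [← hgen p, ← hC (QuotientGroup.mk p), hiC0, td.reps_cos_one, inv_one, mul_one]
      exact Subtype.coe_injective (mul_left_cancel h5)
    have hfst : (σ p).1 = d := (hds p).mpr hm0
    exact Prod.ext hfst hiC0
  · -- infinity
    intro _
    obtain ⟨x0, hx0, hx0d⟩ := hinfX ‹Infinite H›
    set σ : K → A × Fin td.n := fun γ => (x0 (μ γ), td.cos 1) with hσdef
    have hC1σ : σ ∈ C1 := by
      intro γ
      have hXc := hx0
      rw [hXeq] at hXc
      have h2 := hXc (μ γ)
      have heq : (fun f : F => (σ (γ * ((f : H) : K))).1)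
          = fun f : F => x0 (μ γ * (f : H)) := by
        funext f
        show x0 (μ (γ * ((f : H) : K))) = _
        rw [f2 γ (f : H)]
      show (fun f : F => (σ (γ * ((f : H) : K))).1) ∈ M
      rw [heq]
      exact h2
    have hC2σ : σ ∈ C2 := by
      intro γ j hd
      exact absurd hd (hx0d (μ γ))
    refine ⟨σ, ⟨hC1σ, hC2σ⟩, ?_⟩
    intro γ hcon
    have : (σ γ).1 = d := by rw [hcon]
    exact hx0d (μ γ) this
  · -- finiteness clause
    intro hfinK
    exact absurd hfinK (by rw [← not_infinite_iff_finite, not_not]; exact hinfK)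


lemma finite_hasSpecialSymbol (G : Type*) [Group G] [Finite G] : HasSpecialSymbol G := by
  obtain ⟨Φ, hΦ, huniq, hsurj, hfin, -⟩ := finite_obligations G
  refine mk_hasSpecialSymbol true Φ hΦ huniq hsurj ?_ hfin
  intro hinf
  haveI := hinf
  exact (not_finite G).elim

end SS18

/-- A finite-index subgroup `G` of a group `Γ` has the property of special symbol if
and only if `Γ` does. -/
theorem stmt18 (Γ : Type*) [Group Γ] (G : Subgroup Γ) (hG : G.FiniteIndex) :
    HasSpecialSymbol G ↔ HasSpecialSymbol Γ := by
  rcases finite_or_infinite Γ with hfin | hinf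
  · haveI : Finite G := Subtype.finite
    exact ⟨fun _ => SS18.finite_hasSpecialSymbol Γ, fun _ => SS18.finite_hasSpecialSymbol G⟩
  · haveI := hinf
    haveI : Infinite G := SS18.infinite_subgroup_of_finiteIndex hG
    exact ⟨fun h => SS18.up G hG hinf h, fun h => SS18.down G hG ‹Infinite G› h⟩
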